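/- arXiv:2312.01334 — 4 statements merged into one kernel-verified Lean document; each statement's English description precedes it below -/
import Mathlib

section
/- Under the backward recursion g_N(x) = f'(x)/(R + f''(x)), g_l(x) = (f'(x) + R·g_{l+1}(x))/(R + f''(x)), with f three times differentiable, R > 0, f'(x*) = 0 and f''(x*) > 0, the derivative at x* satisfies g_i'(x*) = 1 − (R/(R + f''(x*)))^{N+1−i} for every i = 0, 1, ..., N. -/
/-!
At `x*` both `f'` and every `g_l` vanish, so differentiating the quotient
`g_l = (f' + R g_{l+1}) / (R + f'')` only sees the numerator:
`g_l'(x*) = (c + R g_{l+1}'(x*)) / (R + c)` with `c = f''(x*)`. Writing `q = R / (R + c)`,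
this maps `1 - q^m` to `1 - q^(m+1)`, and the base case `g_N` is the same step from `0 = 1 - q^0`.
-/

theorem HasDerivAt.div_of_apply_eq_zero {𝕜 : Type*} [NontriviallyNormedField 𝕜]
    {u D : 𝕜 → 𝕜} {u' D' x : 𝕜} (hu : HasDerivAt u u' x) (hD : HasDerivAt D D' x)
    (hux : u x = 0) (hDx : D x ≠ 0) : HasDerivAt (fun y => u y / D y) (u' / D x) x := by
  have h := hu.div hD hDx
  rwa [hux, zero_mul, sub_zero, pow_two, mul_div_mul_right _ _ hDx] at h

section BackwardRecursion

variable {F F2 : ℝ → ℝ} {R x : ℝ}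

theorem hasDerivAt_backward_recursion_step (hF : HasDerivAt F (F2 x) x) (hFx : F x = 0)
    (hF2 : DifferentiableAt ℝ F2 x) (hD : R + F2 x ≠ 0) {G : ℝ → ℝ} {m : ℕ}
    (hG : HasDerivAt G (1 - (R / (R + F2 x)) ^ m) x) (hGx : G x = 0) :
    (F x + R * G x) / (R + F2 x) = 0 ∧
      HasDerivAt (fun y => (F y + R * G y) / (R + F2 y))
        (1 - (R / (R + F2 x)) ^ (m + 1)) x := by
  have hnum : F x + R * G x = 0 := by rw [hFx, hGx, mul_zero, add_zero]
  refine ⟨by rw [hnum, zero_div], ?_⟩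
  refine ((hF.fun_add (hG.const_mul R)).div_of_apply_eq_zero (hF2.hasDerivAt.const_add R) hnum
    hD).congr_deriv ?_
  rw [pow_succ, div_eq_iff hD]
  linear_combination (R / (R + F2 x)) ^ m * div_mul_cancel₀ R hD

theorem hasDerivAt_backward_recursion {N : ℕ} {g : ℕ → ℝ → ℝ}
    (hgN : ∀ y, g N y = F y / (R + F2 y))
    (hrec : ∀ l < N, ∀ y, g l y = (F y + R * g (l + 1) y) / (R + F2 y))
    (hF : HasDerivAt F (F2 x) x) (hFx : F x = 0) (hF2 : DifferentiableAt ℝ F2 x)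
    (hD : R + F2 x ≠ 0) :
    ∀ i ≤ N, g i x = 0 ∧ HasDerivAt (g i) (1 - (R / (R + F2 x)) ^ (N + 1 - i)) x := by
  suffices h : ∀ d ≤ N, g (N - d) x = 0 ∧
      HasDerivAt (g (N - d)) (1 - (R / (R + F2 x)) ^ (d + 1)) x by
    intro i hi
    have hNi : N + 1 - i = N - i + 1 := by omega
    simpa only [Nat.sub_sub_self hi, hNi] using h (N - i) (Nat.sub_le N i)
  intro d hd
  induction d with
  | zero =>
    have hG : HasDerivAt (fun _ => (0 : ℝ)) (1 - (R / (R + F2 x)) ^ 0) x := by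
      simpa only [pow_zero, sub_self] using hasDerivAt_const x (0 : ℝ)
    simpa only [Nat.sub_zero, mul_zero, add_zero, funext hgN] using
      hasDerivAt_backward_recursion_step hF hFx hF2 hD hG rfl
  | succ d ih =>
    obtain ⟨hgx, hg⟩ := ih (by omega)
    have hl : N - (d + 1) + 1 = N - d := by omega
    rw [funext (hrec (N - (d + 1)) (by omega)), hl]
    exact hasDerivAt_backward_recursion_step hF hFx hF2 hD hg hgx

end BackwardRecursion

/-- g_i'(x*) = 1 − (R/(R + f''(x*)))^(N+1−i). -/
theorem stmt1 (f : ℝ → ℝ) (hf : ContDiff ℝ 3 f) (R : ℝ) (hR : 0 < R) (N : ℕ)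
    (g : ℕ → ℝ → ℝ)
    (hgN : ∀ x : ℝ, g N x = deriv f x / (R + deriv (deriv f) x))
    (hrec : ∀ l < N, ∀ x : ℝ,
      g l x = (deriv f x + R * g (l + 1) x) / (R + deriv (deriv f) x))
    (xs : ℝ) (hxs : deriv f xs = 0) (hf2 : 0 < deriv (deriv f) xs) :
    ∀ i ≤ N, deriv (g i) xs = 1 - (R / (R + deriv (deriv f) xs)) ^ (N + 1 - i) := by
  have hf' : Differentiable ℝ (deriv f) := by
    simpa only [iteratedDeriv_one] using hf.differentiable_iteratedDeriv 1 (by norm_num)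
  have hf'' : Differentiable ℝ (deriv (deriv f)) := by
    simpa only [iteratedDeriv_succ, iteratedDeriv_zero] using
      hf.differentiable_iteratedDeriv 2 (by norm_num)
  intro i hi
  exact (hasDerivAt_backward_recursion hgN hrec (hf' xs).hasDerivAt hxs (hf'' xs)
    (by linarith) i hi).2.deriv
end

section
/- For real numbers R > 0, a > 0, and natural number N, the following inequality holds: |[(2N+3)·a + R]·R^{N+1} − (R + a)^{N+2}| < (R + a)^{N+2}. -/
lemma key (R a : ℝ) (hR : 0 < R) (ha : 0 < a) :
    ∀ n : ℕ, R ^ n * (R + ((n : ℝ) + 1) * a) ≤ (R + a) ^ (n + 1) := by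
  intro n
  induction n with
  | zero => simp
  | succ n ih =>
    have h1 : (R + a) ^ (n + 2) = (R + a) * (R + a) ^ (n + 1) := by ring
    have hRp : (0:ℝ) < R ^ n := pow_pos hR n
    have h2 : (R + a) * (R ^ n * (R + ((n : ℝ) + 1) * a)) ≤ (R + a) * (R + a) ^ (n + 1) :=
      mul_le_mul_of_nonneg_left ih (by positivity)
    have h3 : R ^ (n + 1) = R ^ n * R := pow_succ R n
    push_cast
    rw [show n + 1 + 1 = n + 2 from rfl, h1, h3]
    nlinarith [mul_pos hRp ha, mul_pos (mul_pos hRp ha) ha]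

/-- |[(2N+3)a + R]·R^(N+1) − (R+a)^(N+2). -/
theorem stmt4 (R a : ℝ) (hR : 0 < R) (ha : 0 < a) (N : ℕ) :
    |((2 * (N : ℝ) + 3) * a + R) * R ^ (N + 1) - (R + a) ^ (N + 2)| <
      (R + a) ^ (N + 2) := by
  have hk := key R a hR ha (N + 1)
  have hRp : (0:ℝ) < R ^ (N + 1) := pow_pos hR _
  rw [abs_sub_lt_iff]
  constructor
  · push_cast at hk ⊢
    nlinarith
  · have hx : 0 < ((2 * (N : ℝ) + 3) * a + R) * R ^ (N + 1) :=
      mul_pos (by positivity) hRp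
    linarith
end

section
/- Let ψ_i(x) = x − g_i(x), where g_i is defined by the backward recursion g_N(x) = f'(x)/(R + f''(x)), g_l(x) = (f'(x) + R·g_{l+1}(x))/(R + f''(x)), f is three times differentiable, R > 0, f'(x*) = 0 and f''(x*) > 0. Then ψ_i'(x*) = (R/(R + f''(x*)))^{N−i+1} for each i = 0, ..., N, and 0 < ψ_i'(x*) < 1. -/
/-!
At `x*` every numerator `f' + R g_{l+1}` vanishes (inductively, `g_l(x*) = 0`), so the quotient rule
loses its `v'` term and `g_l'(x*) = (f''(x*) + R g_{l+1}'(x*)) / (R + f''(x*))`. Rewritten for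
`ψ = id - g` this says `ψ_l'(x*) = s ψ_{l+1}'(x*)` with `s = R / (R + f''(x*)) ∈ (0, 1)`, and the
same computation with `g_{N+1} = 0` gives `ψ_N'(x*) = s`.
-/

theorem HasDerivAt.div_of_eq_zero {𝕜 : Type*} [NontriviallyNormedField 𝕜] {u v : 𝕜 → 𝕜}
    {u' v' x : 𝕜} (hu : HasDerivAt u u' x) (hv : HasDerivAt v v' x) (hu0 : u x = 0)
    (hvx : v x ≠ 0) : HasDerivAt (fun y => u y / v y) (u' / v x) x :=
  (hu.div hv hvx).congr_deriv <| by field_simp; rw [hu0]; ring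

section BackwardRecursion

variable {a b h : ℝ → ℝ} {R x p : ℝ}

theorem hasDerivAt_sub_backwardStep (ha : HasDerivAt a (b x) x) (ha0 : a x = 0)
    (hb : DifferentiableAt ℝ b x) (hc : R + b x ≠ 0) (hh : HasDerivAt (fun y => y - h y) p x)
    (hh0 : h x = 0) :
    (a x + R * h x) / (R + b x) = 0 ∧
      HasDerivAt (fun y => y - (a y + R * h y) / (R + b y)) (R / (R + b x) * p) x := by
  have hnum0 : a x + R * h x = 0 := by rw [ha0, hh0]; ring
  refine ⟨by rw [hnum0, zero_div], ?_⟩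
  have hh' : HasDerivAt h (1 - p) x := by
    simpa using (hasDerivAt_id' x).fun_sub hh
  have hquot := (ha.add (hh'.const_mul R)).div_of_eq_zero (hb.hasDerivAt.const_add R) hnum0 hc
  exact ((hasDerivAt_id x).sub hquot).congr_deriv <| by field_simp; ring

theorem hasDerivAt_sub_backwardRecursion {N : ℕ} {g : ℕ → ℝ → ℝ}
    (hgN : ∀ y, g N y = a y / (R + b y))
    (hrec : ∀ l < N, ∀ y, g l y = (a y + R * g (l + 1) y) / (R + b y))
    (ha : HasDerivAt a (b x) x) (ha0 : a x = 0) (hb : DifferentiableAt ℝ b x)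
    (hc : R + b x ≠ 0) {i : ℕ} (hi : i ≤ N) :
    g i x = 0 ∧ HasDerivAt (fun y => y - g i y) ((R / (R + b x)) ^ (N - i + 1)) x := by
  induction hi using Nat.decreasingInduction with
  | self =>
    have hbase := hasDerivAt_sub_backwardStep (h := 0) ha ha0 hb hc
      (by simpa using hasDerivAt_id' x) rfl
    simpa only [hgN, Nat.sub_self, zero_add, pow_one, Pi.zero_apply, mul_zero, add_zero,
      mul_one] using hbase
  | of_succ l hl ih =>
    have hstep := hasDerivAt_sub_backwardStep ha ha0 hb hc ih.2 ih.1
    rw [← mul_pow_sub_one (by omega), show N - l + 1 - 1 = N - (l + 1) + 1 by omega]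
    simpa only [hrec l hl] using hstep

end BackwardRecursion

/-- ψ_i'(x*) = (R/(R + f''(x*)))^(N−i+1) ∈ (0,1). -/
theorem stmt7 (f : ℝ → ℝ) (hf : ContDiff ℝ 3 f) (R : ℝ) (hR : 0 < R) (N : ℕ)
    (g : ℕ → ℝ → ℝ)
    (hgN : ∀ x : ℝ, g N x = deriv f x / (R + deriv (deriv f) x))
    (hrec : ∀ l < N, ∀ x : ℝ,
      g l x = (deriv f x + R * g (l + 1) x) / (R + deriv (deriv f) x))
    (xs : ℝ) (hxs : deriv f xs = 0) (hf2 : 0 < deriv (deriv f) xs) :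
    ∀ i ≤ N,
      deriv (fun x => x - g i x) xs = (R / (R + deriv (deriv f) xs)) ^ (N - i + 1) ∧
      0 < deriv (fun x => x - g i x) xs ∧ deriv (fun x => x - g i x) xs < 1 := by
  intro i hi
  have hc : 0 < R + deriv (deriv f) xs := by positivity
  have hf' : ContDiff ℝ 2 (deriv f) := by simpa using hf.iterate_deriv' 2 1
  have hf'' : ContDiff ℝ 1 (deriv (deriv f)) := by
    simpa [Function.iterate_succ] using hf.iterate_deriv' 1 2
  have hψ := (hasDerivAt_sub_backwardRecursion hgN hrec
    ((hf'.differentiable (by norm_num)) xs).hasDerivAt hxs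
    ((hf''.differentiable one_ne_zero) xs) hc.ne' hi).2
  have hs0 : 0 < R / (R + deriv (deriv f) xs) := div_pos hR hc
  have hs1 : R / (R + deriv (deriv f) xs) < 1 := by rw [div_lt_one hc]; linarith
  rw [hψ.deriv]
  exact ⟨rfl, pow_pos hs0 _, pow_lt_one₀ hs0.le hs1 (by omega)⟩
end

section
/- Let f be three times continuously differentiable, x* with f'(x*) = 0, f''(x*) > 0. Define ψ_k(x) = x − g_k(x) with g_k from the backward recursion. Then for the varying-step iteration x_{k+1} = x_k − g_k(x_k) (Algorithm 1), for any ε > 0 there is a neighborhood of x* where |x_{k+1} − x*| ≤ (ψ_k'(x*) + ε)|x_k − x*|, and hence |x_{k+1} − x*| ≤ ∏_{i=0}^{k}(ψ_i'(x*) + ε) · |x_0 − x*| as long as all iterates remain in that neighborhood. -/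
/-!
At the critical point `x*` every `g_l` vanishes, so the quotient rule reduces to
`g_l'(x*) = (f''(x*) + R g_{l+1}'(x*)) / (R + f''(x*))`, and downward induction on `l` gives
`ψ_k'(x*) = (R / (R + f''(x*)))^(N-k+1) ≥ 0`. Each `ψ_k` fixes `x*` and is differentiable there,
so it contracts by a factor `ψ_k'(x*) + ε` near `x*`; one neighbourhood serves the finitely many
`k ≤ N`, and chaining the per-step bounds gives the product bound.
-/

open Finset Filter Topology

theorem HasDerivAt.eventually_abs_sub_le {ψ : ℝ → ℝ} {p a ε : ℝ} (hψ : HasDerivAt ψ p a)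
    (hε : 0 < ε) : ∀ᶠ y in 𝓝 a, |ψ y - ψ a| ≤ (|p| + ε) * |y - a| := by
  filter_upwards [(hasDerivAt_iff_isLittleO.mp hψ).def hε] with y hy
  rw [Real.norm_eq_abs, Real.norm_eq_abs, smul_eq_mul] at hy
  calc |ψ y - ψ a| = |(ψ y - ψ a - (y - a) * p) + (y - a) * p| := by rw [sub_add_cancel]
    _ ≤ ε * |y - a| + |y - a| * |p| := (abs_add_le _ _).trans (by rw [abs_mul]; gcongr)
    _ = (|p| + ε) * |y - a| := by ring

theorem HasDerivAt.div_of_apply_eq_zero_s14 {u v : ℝ → ℝ} {a u' : ℝ} (hu : HasDerivAt u u' a)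
    (hua : u a = 0) (hv : DifferentiableAt ℝ v a) (hva : v a ≠ 0) :
    HasDerivAt (fun x => u x / v x) (u' / v a) a := by
  have h := hu.div hv.hasDerivAt hva
  rwa [hua, zero_mul, sub_zero, sq, mul_div_mul_right _ _ hva] at h

theorem le_prod_range_mul_of_le_mul {d c : ℕ → ℝ} {k : ℕ} (hc : ∀ i ≤ k, 0 ≤ c i)
    (hd : ∀ i ≤ k, d (i + 1) ≤ c i * d i) :
    d (k + 1) ≤ (∏ i ∈ range (k + 1), c i) * d 0 := by
  induction k with
  | zero => simpa using hd 0 le_rfl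
  | succ k ih =>
    calc d (k + 2) ≤ c (k + 1) * d (k + 1) := hd (k + 1) le_rfl
      _ ≤ c (k + 1) * ((∏ i ∈ range (k + 1), c i) * d 0) :=
        mul_le_mul_of_nonneg_left (ih (fun i hi => hc i (by omega)) fun i hi => hd i (by omega))
          (hc (k + 1) le_rfl)
      _ = (∏ i ∈ range (k + 2), c i) * d 0 := by rw [prod_range_succ _ (k + 1)]; ring

section BackwardRecursion

variable {f : ℝ → ℝ} {R : ℝ} {N : ℕ} {g : ℕ → ℝ → ℝ} {xs : ℝ}

theorem backward_recursion_hasDerivAt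
    (hgN : ∀ x : ℝ, g N x = deriv f x / (R + deriv (deriv f) x))
    (hrec : ∀ l < N, ∀ x : ℝ,
      g l x = (deriv f x + R * g (l + 1) x) / (R + deriv (deriv f) x))
    (hxs : deriv f xs = 0) (hd1 : DifferentiableAt ℝ (deriv f) xs)
    (hd2 : DifferentiableAt ℝ (deriv (deriv f)) xs) (hc : R + deriv (deriv f) xs ≠ 0)
    {l : ℕ} (hl : l ≤ N) :
    g l xs = 0 ∧
      HasDerivAt (g l) (1 - (R / (R + deriv (deriv f) xs)) ^ (N - l + 1)) xs := by
  have hden : DifferentiableAt ℝ (fun x => R + deriv (deriv f) x) xs :=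
    (differentiableAt_const R).add hd2
  induction hl using Nat.decreasingInduction with
  | self =>
    refine ⟨by rw [hgN, hxs, zero_div], ?_⟩
    rw [show g N = _ from funext hgN, Nat.sub_self, zero_add, pow_one]
    refine (hd1.hasDerivAt.div_of_apply_eq_zero_s14 hxs hden hc).congr_deriv ?_
    field_simp
    ring
  | of_succ l hlN ih =>
    obtain ⟨h0, hder⟩ := ih
    have hnum0 : deriv f xs + R * g (l + 1) xs = 0 := by rw [hxs, h0, mul_zero, add_zero]
    refine ⟨by rw [hrec l hlN, hnum0, zero_div], ?_⟩
    rw [show g l = _ from funext (hrec l hlN), show N - l + 1 = N - (l + 1) + 1 + 1 by omega]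
    refine ((hd1.hasDerivAt.add (hder.const_mul R)).div_of_apply_eq_zero_s14 hnum0 hden
      hc).congr_deriv ?_
    -- `t` stands for the power, which `field_simp` would otherwise unfold
    have hquot (t : ℝ) : (deriv (deriv f) xs + R * (1 - t)) / (R + deriv (deriv f) xs) =
        1 - t * (R / (R + deriv (deriv f) xs)) := by
      field_simp
      ring
    rw [hquot, ← pow_succ]

end BackwardRecursion

/-- local per-step and cumulative contraction estimates for the
varying-step iteration x_{k+1} = x_k − g_k(x_k) (Algorithm 1). -/
theorem stmt14 (f : ℝ → ℝ) (hf : ContDiff ℝ 3 f) (R : ℝ) (hR : 0 < R) (N : ℕ)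
    (g : ℕ → ℝ → ℝ)
    (hgN : ∀ x : ℝ, g N x = deriv f x / (R + deriv (deriv f) x))
    (hrec : ∀ l < N, ∀ x : ℝ,
      g l x = (deriv f x + R * g (l + 1) x) / (R + deriv (deriv f) x))
    (xs : ℝ) (hxs : deriv f xs = 0) (hf2 : 0 < deriv (deriv f) xs) :
    ∀ ε > 0, ∃ δ > 0, ∀ x : ℕ → ℝ,
      (∀ k : ℕ, x (k + 1) = x k - g k (x k)) →
      ∀ k ≤ N, (∀ i ≤ k, |x i - xs| < δ) →
        |x (k + 1) - xs| ≤ (deriv (fun y => y - g k y) xs + ε) * |x k - xs| ∧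
        |x (k + 1) - xs| ≤
          (∏ i ∈ range (k + 1), (deriv (fun y => y - g i y) xs + ε)) *
            |x 0 - xs| := by
  intro ε hε
  have hf' : ContDiff ℝ 2 (deriv f) := hf.deriv' (n := 2)
  have hd1 : DifferentiableAt ℝ (deriv f) xs := hf'.differentiable (by norm_num) xs
  have hd2 : DifferentiableAt ℝ (deriv (deriv f)) xs :=
    (hf'.deriv' (n := 1)).differentiable one_ne_zero xs
  have hc : 0 < R + deriv (deriv f) xs := add_pos hR hf2
  have hψ (k : ℕ) (hk : k ≤ N) : xs - g k xs = xs ∧ HasDerivAt (fun y => y - g k y)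
      ((R / (R + deriv (deriv f) xs)) ^ (N - k + 1)) xs := by
    obtain ⟨h0, hder⟩ := backward_recursion_hasDerivAt hgN hrec hxs hd1 hd2 hc.ne' hk
    exact ⟨by rw [h0, sub_zero], ((hasDerivAt_id' xs).sub hder).congr_deriv (sub_sub_cancel _ _)⟩
  have hψ_deriv_nonneg (k : ℕ) (hk : k ≤ N) : 0 ≤ deriv (fun y => y - g k y) xs := by
    rw [(hψ k hk).2.deriv]
    positivity
  have hlocal : ∀ᶠ y in 𝓝 xs, ∀ k ∈ range (N + 1),
      |y - g k y - xs| ≤ (deriv (fun y => y - g k y) xs + ε) * |y - xs| := by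
    rw [eventually_all_finset]
    intro k hk
    have hk : k ≤ N := Nat.lt_succ_iff.mp (mem_range.mp hk)
    obtain ⟨hfix, hder⟩ := hψ k hk
    have h := hder.eventually_abs_sub_le hε
    rwa [hfix, ← hder.deriv, abs_of_nonneg (hψ_deriv_nonneg k hk)] at h
  obtain ⟨δ, hδ, hball⟩ := Metric.eventually_nhds_iff.mp hlocal
  refine ⟨δ, hδ, fun x hx k hk hclose => ?_⟩
  have hstep (i : ℕ) (hi : i ≤ k) :
      |x (i + 1) - xs| ≤ (deriv (fun y => y - g i y) xs + ε) * |x i - xs| := by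
    rw [hx i]
    exact hball (by rw [Real.dist_eq]; exact hclose i hi) i (mem_range.mpr (by omega))
  exact ⟨hstep k le_rfl, le_prod_range_mul_of_le_mul (d := fun i => |x i - xs|)
    (fun i hi => add_nonneg (hψ_deriv_nonneg i (hi.trans hk)) hε.le) hstep⟩
end
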